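/- For every p ∈ [0,1] and θ ∈ [0, π), the mixed state ρ(p,θ) = p|φ₁⟩⟨φ₁| + (1−p)|φ₂⟩⟨φ₂| (with |φ₁⟩ = cos θ|00⟩ + sin θ|11⟩, |φ₂⟩ = sin θ|00⟩ + cos θ|11⟩) satisfies tr(ρ(p,θ) S_{θ+}) = 2√(1 + sin²2θ), where S_{θ+} = (2/√(1+sin²2θ))(sin 2θ · σ_x⊗σ_x + σ_z⊗σ_z). Hence N(ρ(p,θ)) = 2√(1 + C²) with C = |sin 2θ| the concurrence, i.e., these states saturate the bound N ≤ 2√(1+C²). -/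

import Mathlib

/-!
Both `cos θ|00⟩ + sin θ|11⟩` and `sin θ|00⟩ + cos θ|11⟩`, hence every mixture of them, have
correlation matrix `T = diag(s, -s, 1)` with `s = sin 2θ`. For a CHSH operator with unit
directions `a, a', b, b'` one gets `tr(ρS) = a·T(b+b') + a'·T(b-b') ≤ |T(b+b')| + |T(b-b')|`, and
since `b ± b'` are orthogonal with squared lengths summing to `4`, Cauchy–Schwarz together with
Bessel's inequality bounds this by `2√(1 + s²)`, the Horodecki value. The operator `S_{θ+}` is the
CHSH operator of explicit directions attaining it.
-/

open Matrix Complex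
open scoped Kronecker ComplexOrder

/-- The Pauli matrices `σ₁ = X`, `σ₂ = Y`, `σ₃ = Z`. -/
noncomputable def pauli : Fin 3 → Matrix (Fin 2) (Fin 2) ℂ
  | 0 => !![0, 1; 1, 0]
  | 1 => !![0, -Complex.I; Complex.I, 0]
  | 2 => !![1, 0; 0, -1]

/-- The qubit observable `v·σ` associated to a vector `v ∈ ℝ³`. -/
noncomputable def obsOf (v : Fin 3 → ℝ) : Matrix (Fin 2) (Fin 2) ℂ :=
  ∑ i, (v i : ℂ) • pauli i

/-- A CHSH operator `S = A⊗(B+B') + A'⊗(B−B')` with `A, A', B, B'` of the form `v·σ`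
for unit vectors `v ∈ ℝ³`. -/
def IsCHSH (S : Matrix (Fin 2 × Fin 2) (Fin 2 × Fin 2) ℂ) : Prop :=
  ∃ a a' b b' : Fin 3 → ℝ,
    (∑ i, a i ^ 2 = 1) ∧ (∑ i, a' i ^ 2 = 1) ∧
    (∑ i, b i ^ 2 = 1) ∧ (∑ i, b' i ^ 2 = 1) ∧
    S = obsOf a ⊗ₖ (obsOf b + obsOf b') + obsOf a' ⊗ₖ (obsOf b - obsOf b')

/-- The nonlocality `N(ρ) = sup_S tr(ρS)` over CHSH operators `S`. -/
noncomputable def Nloc (ρ : Matrix (Fin 2 × Fin 2) (Fin 2 × Fin 2) ℂ) : ℝ :=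
  sSup {x : ℝ | ∃ S, IsCHSH S ∧ x = ((ρ * S).trace).re}

open scoped ComplexConjugate

lemma dotProduct_le_sqrt {ι : Type*} [Fintype ι] {a : ι → ℝ} (ha : ∑ i, a i ^ 2 = 1)
    (w : ι → ℝ) : a ⬝ᵥ w ≤ √(w ⬝ᵥ w) := by
  have h := Real.sum_mul_le_sqrt_mul_sqrt Finset.univ a w
  rw [ha, Real.sqrt_one, one_mul] at h
  simpa [dotProduct, sq] using h

/-- Bessel's inequality for the third basis vector against the orthogonal pair `u`, `v`. -/
lemma sq_mul_add_sq_mul_le_of_dotProduct_eq_zero {u v : Fin 3 → ℝ} (h : u ⬝ᵥ v = 0) :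
    u 2 ^ 2 * (v ⬝ᵥ v) + v 2 ^ 2 * (u ⬝ᵥ u) ≤ (u ⬝ᵥ u) * (v ⬝ᵥ v) := by
  simp only [dotProduct, Fin.sum_univ_three] at h ⊢
  have h2 : (u 0 * v 0 + u 1 * v 1) ^ 2 = (u 2 * v 2) ^ 2 := by
    rw [show u 0 * v 0 + u 1 * v 1 = -(u 2 * v 2) by linarith]; ring
  nlinarith [sq_nonneg (u 0 * v 1 - u 1 * v 0)]

/-- Cauchy–Schwarz `√X + √Y ≤ √(U + V) · √(X / U + Y / V)`, cleared of denominators. -/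
lemma sqrt_add_sqrt_le {X Y U V W : ℝ} (hX : 0 ≤ X) (hY : 0 ≤ Y) (hU : 0 ≤ U) (hV : 0 ≤ V)
    (hXU : X ≤ W * U) (hYV : Y ≤ W * V) (h : X * V + Y * U ≤ W * U * V) :
    √X + √Y ≤ √((U + V) * W) := by
  rcases hU.eq_or_lt with rfl | hU
  · rw [show X = 0 by linarith, Real.sqrt_zero, zero_add, zero_add, mul_comm]
    exact Real.sqrt_le_sqrt hYV
  rcases hV.eq_or_lt with rfl | hV
  · rw [show Y = 0 by linarith, Real.sqrt_zero, add_zero, add_zero, mul_comm]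
    exact Real.sqrt_le_sqrt hXU
  rw [← Real.sqrt_sq (by positivity : 0 ≤ √X + √Y)]
  refine Real.sqrt_le_sqrt (le_of_mul_le_mul_right ?_ (mul_pos hU hV))
  have hgap : (U + V) * (X * V + Y * U) - (√X + √Y) ^ 2 * (U * V) = (√X * V - √Y * U) ^ 2 := by
    nth_rw 1 [← Real.sq_sqrt hX, ← Real.sq_sqrt hY]
    ring
  calc (√X + √Y) ^ 2 * (U * V) ≤ (U + V) * (X * V + Y * U) := by
        linarith [sq_nonneg (√X * V - √Y * U)]
    _ ≤ (U + V) * (W * U * V) := by gcongr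
    _ = (U + V) * W * (U * V) := by ring

lemma sq_two_le_dotProduct_self (u : Fin 3 → ℝ) : u 2 ^ 2 ≤ u ⬝ᵥ u := by
  simp only [dotProduct, Fin.sum_univ_three]
  nlinarith [mul_self_nonneg (u 0), mul_self_nonneg (u 1)]

lemma obsOf_add (v w : Fin 3 → ℝ) : obsOf (v + w) = obsOf v + obsOf w := by
  simp [obsOf, add_smul, Finset.sum_add_distrib]

lemma obsOf_sub (v w : Fin 3 → ℝ) : obsOf (v - w) = obsOf v - obsOf w := by
  simp [obsOf, sub_smul, Finset.sum_sub_distrib]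

lemma obsOf_vec3 (x y z : ℝ) :
    obsOf ![x, y, z] = (x : ℂ) • pauli 0 + (y : ℂ) • pauli 1 + (z : ℂ) • pauli 2 := by
  simp [obsOf, Fin.sum_univ_three]

lemma obsOf_eq_matrix (v : Fin 3 → ℝ) : obsOf v =
    !![(v 2 : ℂ), v 0 - v 1 * I; v 0 + v 1 * I, -(v 2 : ℂ)] := by
  ext i j
  fin_cases i <;> fin_cases j <;> simp [obsOf, pauli, Fin.sum_univ_three, sub_eq_add_neg]

noncomputable def bellVec (α β : ℝ) : Fin 2 × Fin 2 → ℂ :=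
  fun q => if q = (0, 0) then (α : ℂ) else if q = (1, 1) then (β : ℂ) else 0

/-- The correlation matrix `T_ij = tr(ρ σ_i ⊗ σ_j)` shared by `α|00⟩ + β|11⟩`, `β|00⟩ + α|11⟩`
and their mixtures, where `s = 2αβ` and `α² + β² = 1`. -/
noncomputable def bellCorrelation (s : ℝ) : Matrix (Fin 3) (Fin 3) ℝ :=
  diagonal ![s, -s, 1]

lemma trace_bellVec_mul_kronecker_obsOf {α β : ℝ} (h : α ^ 2 + β ^ 2 = 1) (x y : Fin 3 → ℝ) :
    (vecMulVec (bellVec α β) (fun q => conj (bellVec α β q)) * (obsOf x ⊗ₖ obsOf y)).trace =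
      (x ⬝ᵥ (bellCorrelation (2 * α * β) *ᵥ y) : ℝ) := by
  rw [vecMulVec_mul, trace_vecMulVec, obsOf_eq_matrix, obsOf_eq_matrix]
  simp only [dotProduct, bellVec, vecMul, kroneckerMap_apply, of_apply, cons_val', cons_val_fin_one,
    Fintype.sum_prod_type, Prod.mk.injEq, Fin.sum_univ_two, and_true, zero_ne_one, and_false,
    if_true, if_false, cons_val_zero, one_ne_zero, cons_val_one, conj_ofReal, map_zero, zero_mul,
    add_zero, zero_add, bellCorrelation, mulVec_diagonal, Fin.sum_univ_three, cons_val, one_mul,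
    ofReal_add, ofReal_mul, ofReal_ofNat, ofReal_neg]
  have hC : (α : ℂ) ^ 2 + (β : ℂ) ^ 2 = 1 := by exact_mod_cast h
  linear_combination (x 2 * y 2 : ℂ) * hC + (2 * α * β * x 1 * y 1 : ℂ) * I_sq

lemma trace_mixture_mul_kronecker_obsOf (p θ : ℝ) (x y : Fin 3 → ℝ) :
    (((p : ℂ) • vecMulVec (bellVec (Real.cos θ) (Real.sin θ))
        (fun q => conj (bellVec (Real.cos θ) (Real.sin θ) q)) +
      ((1 - p : ℝ) : ℂ) • vecMulVec (bellVec (Real.sin θ) (Real.cos θ))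
        (fun q => conj (bellVec (Real.sin θ) (Real.cos θ) q))) * (obsOf x ⊗ₖ obsOf y)).trace =
      (x ⬝ᵥ (bellCorrelation (Real.sin (2 * θ)) *ᵥ y) : ℝ) := by
  rw [add_mul, trace_add, smul_mul_assoc, smul_mul_assoc, trace_smul, trace_smul,
    trace_bellVec_mul_kronecker_obsOf (Real.cos_sq_add_sin_sq θ),
    trace_bellVec_mul_kronecker_obsOf (Real.sin_sq_add_cos_sq θ), mul_right_comm 2 (Real.cos θ),
    ← Real.sin_two_mul, smul_eq_mul, smul_eq_mul, ← add_mul, ← ofReal_add, add_sub_cancel,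
    ofReal_one, one_mul]

lemma bellCorrelation_mulVec_dotProduct_self (s : ℝ) (u : Fin 3 → ℝ) :
    (bellCorrelation s *ᵥ u) ⬝ᵥ (bellCorrelation s *ᵥ u) =
      s ^ 2 * (u ⬝ᵥ u) + (1 - s ^ 2) * u 2 ^ 2 := by
  simp only [dotProduct, bellCorrelation, mulVec_diagonal, Fin.sum_univ_three, cons_val_zero,
    cons_val_one, cons_val, neg_mul, mul_neg, neg_neg, one_mul]
  ring

lemma sqrt_add_sqrt_bellCorrelation_le {s : ℝ} (hs : s ^ 2 ≤ 1) {u v : Fin 3 → ℝ}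
    (huv : u ⬝ᵥ v = 0) (hsum : u ⬝ᵥ u + v ⬝ᵥ v = 4) :
    √((bellCorrelation s *ᵥ u) ⬝ᵥ (bellCorrelation s *ᵥ u)) +
      √((bellCorrelation s *ᵥ v) ⬝ᵥ (bellCorrelation s *ᵥ v)) ≤ 2 * √(1 + s ^ 2) := by
  rw [bellCorrelation_mulVec_dotProduct_self, bellCorrelation_mulVec_dotProduct_self]
  have hu := sq_two_le_dotProduct_self u
  have hv := sq_two_le_dotProduct_self v
  have hcross := mul_le_mul_of_nonneg_left
    (sq_mul_add_sq_mul_le_of_dotProduct_eq_zero huv) (sub_nonneg.2 hs)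
  calc _ ≤ √((u ⬝ᵥ u + v ⬝ᵥ v) * (1 + s ^ 2)) := by
        apply sqrt_add_sqrt_le <;> nlinarith [sq_nonneg s, sq_nonneg (u 2), sq_nonneg (v 2)]
    _ = 2 * √(1 + s ^ 2) := by
        rw [hsum, Real.sqrt_mul (by norm_num), show (4 : ℝ) = 2 ^ 2 by norm_num,
          Real.sqrt_sq (by norm_num)]

noncomputable def chshOp (a a' b b' : Fin 3 → ℝ) : Matrix (Fin 2 × Fin 2) (Fin 2 × Fin 2) ℂ :=
  obsOf a ⊗ₖ (obsOf b + obsOf b') + obsOf a' ⊗ₖ (obsOf b - obsOf b')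

lemma trace_mul_chshOp {ρ : Matrix (Fin 2 × Fin 2) (Fin 2 × Fin 2) ℂ}
    {T : Matrix (Fin 3) (Fin 3) ℝ}
    (hρ : ∀ x y, (ρ * (obsOf x ⊗ₖ obsOf y)).trace = (x ⬝ᵥ (T *ᵥ y) : ℝ))
    (a a' b b' : Fin 3 → ℝ) :
    (ρ * chshOp a a' b b').trace = (a ⬝ᵥ (T *ᵥ (b + b')) + a' ⬝ᵥ (T *ᵥ (b - b')) : ℝ) := by
  rw [chshOp, ← obsOf_add, ← obsOf_sub, mul_add, trace_add, hρ, hρ, ofReal_add]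

lemma chsh_bellCorrelation_le {s : ℝ} (hs : s ^ 2 ≤ 1) {a a' b b' : Fin 3 → ℝ}
    (ha : ∑ i, a i ^ 2 = 1) (ha' : ∑ i, a' i ^ 2 = 1)
    (hb : ∑ i, b i ^ 2 = 1) (hb' : ∑ i, b' i ^ 2 = 1) :
    a ⬝ᵥ (bellCorrelation s *ᵥ (b + b')) + a' ⬝ᵥ (bellCorrelation s *ᵥ (b - b')) ≤
      2 * √(1 + s ^ 2) := by
  have hbb : b ⬝ᵥ b = 1 := by simpa [dotProduct, sq] using hb
  have hbb' : b' ⬝ᵥ b' = 1 := by simpa [dotProduct, sq] using hb'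
  have horth : (b + b') ⬝ᵥ (b - b') = 0 := by
    simp only [add_dotProduct, dotProduct_sub, hbb, hbb', dotProduct_comm b' b]
    ring
  have hsum : (b + b') ⬝ᵥ (b + b') + (b - b') ⬝ᵥ (b - b') = 4 := by
    simp only [add_dotProduct, dotProduct_add, sub_dotProduct, dotProduct_sub, hbb, hbb',
      dotProduct_comm b' b]
    ring
  linarith [dotProduct_le_sqrt ha (bellCorrelation s *ᵥ (b + b')),
    dotProduct_le_sqrt ha' (bellCorrelation s *ᵥ (b - b')),
    sqrt_add_sqrt_bellCorrelation_le hs horth hsum]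

/-- With `a = z`, `a' = x`, the directions `b, b' = chshDir (±s)` make `b + b'` and `b - b'`
point along the two largest singular directions of `diag(s, -s, 1)`, so the bound is attained. -/
noncomputable def chshDir (s : ℝ) : Fin 3 → ℝ := ![s / √(1 + s ^ 2), 0, 1 / √(1 + s ^ 2)]

lemma sum_chshDir_sq (s : ℝ) : ∑ i, chshDir s i ^ 2 = 1 := by
  have hw : 0 < 1 + s ^ 2 := by positivity
  simp only [chshDir, Fin.sum_univ_three, cons_val_zero, cons_val_one, cons_val, div_pow,
    Real.sq_sqrt hw.le]
  field_simp
  ring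

lemma chshOp_chshDir (s : ℝ) :
    chshOp ![0, 0, 1] ![1, 0, 0] (chshDir s) (chshDir (-s)) =
      ((2 / √(1 + s ^ 2) : ℝ) : ℂ) • ((s : ℂ) • (pauli 0 ⊗ₖ pauli 0) + pauli 2 ⊗ₖ pauli 2) := by
  have hsum : obsOf (chshDir s) + obsOf (chshDir (-s)) =
      ((2 / √(1 + s ^ 2) : ℝ) : ℂ) • pauli 2 := by
    rw [chshDir, chshDir, neg_sq, obsOf_vec3, obsOf_vec3]
    push_cast
    module
  have hdiff : obsOf (chshDir s) - obsOf (chshDir (-s)) =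
      ((2 * s / √(1 + s ^ 2) : ℝ) : ℂ) • pauli 0 := by
    rw [chshDir, chshDir, neg_sq, obsOf_vec3, obsOf_vec3]
    push_cast
    module
  have hz : obsOf ![0, 0, 1] = pauli 2 := by simp [obsOf_vec3]
  have hx : obsOf ![1, 0, 0] = pauli 0 := by simp [obsOf_vec3]
  rw [chshOp, hsum, hdiff, hz, hx, kronecker_smul, kronecker_smul]
  push_cast
  module

lemma isCHSH_optimal (s : ℝ) :
    IsCHSH (((2 / √(1 + s ^ 2) : ℝ) : ℂ) • ((s : ℂ) • (pauli 0 ⊗ₖ pauli 0) + pauli 2 ⊗ₖ pauli 2)) :=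
  ⟨_, _, _, _, by simp [Fin.sum_univ_three], by simp [Fin.sum_univ_three], sum_chshDir_sq s,
    sum_chshDir_sq (-s), (chshOp_chshDir s).symm⟩

lemma chsh_bellCorrelation_chshDir (s : ℝ) :
    ![0, 0, 1] ⬝ᵥ (bellCorrelation s *ᵥ (chshDir s + chshDir (-s))) +
      ![1, 0, 0] ⬝ᵥ (bellCorrelation s *ᵥ (chshDir s - chshDir (-s))) = 2 * √(1 + s ^ 2) := by
  have hw : 0 < 1 + s ^ 2 := by positivity
  simp only [dotProduct, bellCorrelation, chshDir, Even.neg_pow even_two, add_cons, sub_cons,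
    head_cons, tail_cons, empty_add_empty, empty_sub_empty, mulVec_diagonal, Fin.sum_univ_three,
    cons_val_zero, cons_val_one, cons_val]
  field_simp
  rw [Real.sq_sqrt hw.le]
  ring

lemma trace_mul_optimal {ρ : Matrix (Fin 2 × Fin 2) (Fin 2 × Fin 2) ℂ} {s : ℝ}
    (hρ : ∀ x y, (ρ * (obsOf x ⊗ₖ obsOf y)).trace = (x ⬝ᵥ (bellCorrelation s *ᵥ y) : ℝ)) :
    (ρ * (((2 / √(1 + s ^ 2) : ℝ) : ℂ) •
      ((s : ℂ) • (pauli 0 ⊗ₖ pauli 0) + pauli 2 ⊗ₖ pauli 2))).trace = (2 * √(1 + s ^ 2) : ℝ) := by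
  rw [← chshOp_chshDir, trace_mul_chshOp hρ, chsh_bellCorrelation_chshDir]

lemma nloc_eq_of_bellCorrelation {ρ : Matrix (Fin 2 × Fin 2) (Fin 2 × Fin 2) ℂ} {s : ℝ}
    (hρ : ∀ x y, (ρ * (obsOf x ⊗ₖ obsOf y)).trace = (x ⬝ᵥ (bellCorrelation s *ᵥ y) : ℝ))
    (hs : s ^ 2 ≤ 1) : Nloc ρ = 2 * √(1 + s ^ 2) := by
  refine IsGreatest.csSup_eq ⟨⟨_, isCHSH_optimal s, by rw [trace_mul_optimal hρ, ofReal_re]⟩, ?_⟩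
  rintro _ ⟨_, ⟨a, a', b, b', ha, ha', hb, hb', rfl⟩, rfl⟩
  rw [← chshOp, trace_mul_chshOp hρ, ofReal_re]
  exact chsh_bellCorrelation_le hs ha ha' hb hb'

theorem stmt17_general (p θ : ℝ)
    (φ₁ φ₂ : Fin 2 × Fin 2 → ℂ)
    (hφ₁ : φ₁ = fun q => if q = (0, 0) then (Real.cos θ : ℂ)
      else if q = (1, 1) then (Real.sin θ : ℂ) else 0)
    (hφ₂ : φ₂ = fun q => if q = (0, 0) then (Real.sin θ : ℂ)
      else if q = (1, 1) then (Real.cos θ : ℂ) else 0)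
    (ρ : Matrix (Fin 2 × Fin 2) (Fin 2 × Fin 2) ℂ)
    (hρ : ρ = (p : ℂ) • Matrix.vecMulVec φ₁ (fun q => conj (φ₁ q)) +
      ((1 - p : ℝ) : ℂ) • Matrix.vecMulVec φ₂ (fun q => conj (φ₂ q)))
    (S : Matrix (Fin 2 × Fin 2) (Fin 2 × Fin 2) ℂ)
    (hS : S = ((2 / Real.sqrt (1 + Real.sin (2 * θ) ^ 2) : ℝ) : ℂ) •
      (((Real.sin (2 * θ) : ℝ) : ℂ) • (pauli 0 ⊗ₖ pauli 0) + pauli 2 ⊗ₖ pauli 2)) :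
    ((ρ * S).trace).re = 2 * Real.sqrt (1 + Real.sin (2 * θ) ^ 2) ∧
    Nloc ρ = 2 * Real.sqrt (1 + |Real.sin (2 * θ)| ^ 2) := by
  have hcorr : ∀ x y, (ρ * (obsOf x ⊗ₖ obsOf y)).trace =
      (x ⬝ᵥ (bellCorrelation (Real.sin (2 * θ)) *ᵥ y) : ℝ) := by
    subst hρ hφ₁ hφ₂
    exact trace_mixture_mul_kronecker_obsOf p θ
  subst hS
  exact ⟨by rw [trace_mul_optimal hcorr, ofReal_re],
    by rw [sq_abs, nloc_eq_of_bellCorrelation hcorr (Real.sin_sq_le_one _)]⟩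

/-- The states `ρ(p,θ) = p|φ₁⟩⟨φ₁| + (1−p)|φ₂⟩⟨φ₂|` saturate the
Verstraete–Wolf bound: `tr(ρ(p,θ) S_{θ+}) = 2√(1+sin²2θ)`, and hence
`N(ρ(p,θ)) = 2√(1+C²)` with `C = |sin 2θ|` the concurrence. -/
theorem stmt17 (p θ : ℝ) (hp : p ∈ Set.Icc (0 : ℝ) 1) (hθ : θ ∈ Set.Ico 0 Real.pi)
    (φ₁ φ₂ : Fin 2 × Fin 2 → ℂ)
    (hφ₁ : φ₁ = fun q => if q = (0, 0) then (Real.cos θ : ℂ)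
      else if q = (1, 1) then (Real.sin θ : ℂ) else 0)
    (hφ₂ : φ₂ = fun q => if q = (0, 0) then (Real.sin θ : ℂ)
      else if q = (1, 1) then (Real.cos θ : ℂ) else 0)
    (ρ : Matrix (Fin 2 × Fin 2) (Fin 2 × Fin 2) ℂ)
    (hρ : ρ = (p : ℂ) • Matrix.vecMulVec φ₁ (fun q => conj (φ₁ q)) +
      ((1 - p : ℝ) : ℂ) • Matrix.vecMulVec φ₂ (fun q => conj (φ₂ q)))
    (S : Matrix (Fin 2 × Fin 2) (Fin 2 × Fin 2) ℂ)
    (hS : S = ((2 / Real.sqrt (1 + Real.sin (2 * θ) ^ 2) : ℝ) : ℂ) •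
      (((Real.sin (2 * θ) : ℝ) : ℂ) • (pauli 0 ⊗ₖ pauli 0) + pauli 2 ⊗ₖ pauli 2)) :
    ((ρ * S).trace).re = 2 * Real.sqrt (1 + Real.sin (2 * θ) ^ 2) ∧
    Nloc ρ = 2 * Real.sqrt (1 + |Real.sin (2 * θ)| ^ 2) :=
  stmt17_general p θ φ₁ φ₂ hφ₁ hφ₂ ρ hρ S hS
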